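/- arXiv:cs/0607145 — 2 statements merged into one kernel-verified Lean document; each statement's English description precedes it below -/
import Mathlib

section
/- Let S be a nonempty closed subset of ℝ² and define r_lct(p) for p ∈ ℝ² as the infimum of all radii r > 0 such that the closed ball B(p, r) ∩ S is disconnected (infimum of the empty set being ∞). Then the set Π(S) = {p ∈ ℝ² : r_lct(p) < ∞}, i.e. the set of points p for which some closed ball centered at p meets S in a disconnected set, is open in the Euclidean topology. -/
/-!
A disconnection of the closed set `closedBall p r ∩ S` is witnessed by two disjoint open sets
covering it. By compactness of `closedBall p r` they still cover `closedBall p (r + δ) ∩ S` for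
some `δ > 0`. For `q` within `δ / 2` of `p`, the set `closedBall q (r + δ / 2) ∩ S` lies between
these two sets, so the same open sets disconnect it.
-/

open Metric Set

theorem exists_isOpen_separation_of_not_isPreconnected {X : Type*} [TopologicalSpace X]
    [NormalSpace X] {K : Set X} (hK : IsClosed K) (h : ¬ IsPreconnected K) :
    ∃ U V : Set X, IsOpen U ∧ IsOpen V ∧ Disjoint U V ∧ K ⊆ U ∪ V ∧
      (K ∩ U).Nonempty ∧ (K ∩ V).Nonempty := by
  rw [isPreconnected_iff_subset_of_fully_disjoint_closed hK] at h
  push Not at h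
  obtain ⟨u, v, hu, hv, hKuv, huv, hKu, hKv⟩ := h
  obtain ⟨U, V, hU, hV, huU, hvV, hUV⟩ := normal_separation hu hv huv
  have mem_u : ∀ x ∈ K, x ∉ v → x ∈ u := fun x hx hxv => (hKuv hx).resolve_right hxv
  have mem_v : ∀ x ∈ K, x ∉ u → x ∈ v := fun x hx hxu => (hKuv hx).resolve_left hxu
  obtain ⟨a, haK, hav⟩ := not_subset.mp hKv
  obtain ⟨b, hbK, hbu⟩ := not_subset.mp hKu
  exact ⟨U, V, hU, hV, hUV, hKuv.trans (union_subset_union huU hvV),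
    ⟨a, haK, huU (mem_u a haK hav)⟩, ⟨b, hbK, hvV (mem_v b hbK hbu)⟩⟩

theorem not_isPreconnected_of_subset_of_separation {X : Type*} [TopologicalSpace X]
    {K L U V : Set X} (hU : IsOpen U) (hV : IsOpen V) (hUV : Disjoint U V) (hKL : K ⊆ L)
    (hLUV : L ⊆ U ∪ V) (hKU : (K ∩ U).Nonempty) (hKV : (K ∩ V).Nonempty) :
    ¬ IsPreconnected L := fun hL =>
  have ⟨_, _, hxU, hxV⟩ := hL U V hU hV hLUV (hKU.mono (inter_subset_inter_left U hKL))
    (hKV.mono (inter_subset_inter_left V hKL))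
  disjoint_left.mp hUV hxU hxV

theorem exists_closedBall_inter_subset_of_closedBall_inter_subset {E : Type*}
    [SeminormedAddCommGroup E] [NormedSpace ℝ E] [ProperSpace E] {S W : Set E}
    (hS : IsClosed S) (hW : IsOpen W) {p : E} {r : ℝ} (hr : 0 ≤ r)
    (h : closedBall p r ∩ S ⊆ W) : ∃ δ > 0, closedBall p (r + δ) ∩ S ⊆ W := by
  have hball : closedBall p r ⊆ W ∪ Sᶜ := fun x hx =>
    (em (x ∈ S)).elim (fun hxS => .inl (h ⟨hx, hxS⟩)) .inr
  obtain ⟨δ, hδ, hδW⟩ :=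
    (isCompact_closedBall p r).exists_cthickening_subset_open (hW.union hS.isOpen_compl) hball
  rw [cthickening_closedBall hδ.le hr, add_comm] at hδW
  exact ⟨δ, hδ, fun x ⟨hx, hxS⟩ => (hδW hx).resolve_right (not_not_intro hxS)⟩

theorem isOpen_setOf_exists_not_isPreconnected_closedBall_inter {E : Type*}
    [SeminormedAddCommGroup E] [NormedSpace ℝ E] [ProperSpace E] {S : Set E}
    (hS : IsClosed S) : IsOpen {p : E | ∃ r > (0 : ℝ), ¬ IsPreconnected (closedBall p r ∩ S)} := by
  rw [Metric.isOpen_iff]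
  rintro p ⟨r, hr, hK⟩
  obtain ⟨U, V, hU, hV, hUV, hKUV, hKU, hKV⟩ :=
    exists_isOpen_separation_of_not_isPreconnected (isClosed_closedBall.inter hS) hK
  obtain ⟨δ, hδ, hδUV⟩ :=
    exists_closedBall_inter_subset_of_closedBall_inter_subset hS (hU.union hV) hr.le hKUV
  refine ⟨δ / 2, half_pos hδ, fun q hq => ⟨r + δ / 2, by positivity, ?_⟩⟩
  rw [mem_ball] at hq
  have hsub_q : closedBall p r ⊆ closedBall q (r + δ / 2) :=
    closedBall_subset_closedBall' (by rw [dist_comm]; linarith)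
  have hq_sub : closedBall q (r + δ / 2) ⊆ closedBall p (r + δ) :=
    closedBall_subset_closedBall' (by linarith)
  exact not_isPreconnected_of_subset_of_separation hU hV hUV
    (inter_subset_inter_left S hsub_q) ((inter_subset_inter_left S hq_sub).trans hδUV) hKU hKV

theorem pi_set_isOpen_general (S : Set (EuclideanSpace ℝ (Fin 2)))
    (hclosed : IsClosed S) :
    IsOpen {p : EuclideanSpace ℝ (Fin 2) |
      ∃ r > (0 : ℝ), ¬ IsPreconnected (closedBall p r ∩ S)} :=
  isOpen_setOf_exists_not_isPreconnected_closedBall_inter hclosed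

/-- The set Π(S) of points `p` such that some closed ball centered at `p`
meets the nonempty closed set `S` in a disconnected set is open. -/
theorem pi_set_isOpen (S : Set (EuclideanSpace ℝ (Fin 2)))
    (hS : S.Nonempty) (hclosed : IsClosed S) :
    IsOpen {p : EuclideanSpace ℝ (Fin 2) |
      ∃ r > (0 : ℝ), ¬ IsPreconnected (closedBall p r ∩ S)} :=
  pi_set_isOpen_general S hclosed
end

section
/- If S ⊆ ℝ² is a circle (the set of points at a fixed distance R > 0 from a fixed center c), then for every point p ∈ ℝ² and every r > 0 the intersection of the closed ball B(p,r) with S is connected; hence Π(S) is empty. -/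
/-!
Write the points of the circle as `c + R u w` with `‖w‖ = 1`, where `u` is the unit vector from `c`
towards `p`. Then `‖c + R u w - p‖² = R² + ‖p - c‖² - 2 R ‖p - c‖ Re w`, so a closed ball meets the
circle in the image of a cap `{w : ‖w‖ = 1, s ≤ Re w}` of the unit circle. Such a cap is empty or
the arc `{exp (iθ) : |θ| ≤ arccos s}`, hence connected.
-/

open Metric Module

open Real in
theorem Real.le_cos_iff_abs_le_arccos {x s : ℝ} (hx : |x| ≤ π) (hs : s ≤ 1) :
    s ≤ cos x ↔ |x| ≤ arccos s := by
  rcases lt_or_ge s (-1) with hs' | hs'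
  · simp only [arccos_of_le_neg_one hs'.le, hx, iff_true]
    linarith [neg_one_le_cos x]
  rw [← cos_abs]
  constructor
  · intro h
    rw [← arccos_cos (abs_nonneg x) hx]
    exact arccos_le_arccos h
  · intro h
    rw [← cos_arccos hs' hs]
    exact cos_le_cos_of_nonneg_of_le_pi (abs_nonneg x) (arccos_le_pi s) h

namespace Complex

theorem sphere_inter_le_re_eq_image {s : ℝ} (hs : s ≤ 1) :
    sphere (0 : ℂ) 1 ∩ {w | s ≤ w.re} =
      (fun x : ℝ => exp (x * I)) '' Set.Icc (-Real.arccos s) (Real.arccos s) := by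
  ext w
  simp only [Set.mem_inter_iff, mem_sphere_zero_iff_norm, Set.mem_ofPred_eq, Set.mem_image,
    Set.mem_Icc, ← abs_le]
  constructor
  · rintro ⟨hw, hsw⟩
    have hw0 : w ≠ 0 := by rintro rfl; simp at hw
    refine ⟨arg w, ?_, by simpa [hw] using norm_mul_exp_arg_mul_I w⟩
    rw [← Real.le_cos_iff_abs_le_arccos (abs_arg_le_pi w) hs, cos_arg hw0, hw, div_one]
    exact hsw
  · rintro ⟨x, hx, rfl⟩
    refine ⟨norm_exp_ofReal_mul_I x, ?_⟩
    rw [exp_ofReal_mul_I_re, Real.le_cos_iff_abs_le_arccos _ hs]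
    · exact hx
    · exact hx.trans (Real.arccos_le_pi s)

theorem isPreconnected_sphere_inter_le_re (s : ℝ) :
    IsPreconnected (sphere (0 : ℂ) 1 ∩ {w | s ≤ w.re}) := by
  rcases le_or_gt s 1 with hs | hs
  · rw [sphere_inter_le_re_eq_image hs]
    exact isPreconnected_Icc.image _ (by fun_prop)
  · convert isPreconnected_empty
    refine Set.eq_empty_iff_forall_notMem.2 fun w ⟨hw, hsw⟩ => ?_
    have : w.re ≤ 1 := (re_le_norm w).trans (mem_sphere_zero_iff_norm.1 hw).le
    exact hs.not_ge (hsw.trans this)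

theorem isPreconnected_sphere_inter_le_mul_re (t : ℝ) {k : ℝ} (hk : 0 ≤ k) :
    IsPreconnected (sphere (0 : ℂ) 1 ∩ {w | t ≤ k * w.re}) := by
  rcases hk.eq_or_lt with rfl | hk
  · by_cases ht : t ≤ 0
    · simpa [ht] using isPreconnected_sphere (by simp) (0 : ℂ) 1
    · simpa [ht] using isPreconnected_empty
  · simpa only [← div_le_iff₀' hk] using isPreconnected_sphere_inter_le_re (t / k)

theorem norm_ofReal_mul_sub_ofReal_sq {w : ℂ} (hw : ‖w‖ = 1) (a b : ℝ) :
    ‖a * w - b‖ ^ 2 = a ^ 2 + b ^ 2 - 2 * a * b * w.re := by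
  have hw' : normSq w = 1 := by rw [← Complex.sq_norm, hw, one_pow]
  rw [normSq_apply] at hw'
  rw [Complex.sq_norm, normSq_apply]
  simp only [sub_re, sub_im, mul_re, mul_im, ofReal_re, ofReal_im]
  linear_combination a ^ 2 * hw'

theorem isPreconnected_closedBall_inter_sphere (p c : ℂ) (r R : ℝ) :
    IsPreconnected (closedBall p r ∩ sphere c R) := by
  rcases le_or_gt R 0 with hR | hR
  · exact ((subsingleton_sphere c hR).anti Set.inter_subset_right).isPreconnected
  rcases lt_or_ge r 0 with hr | hr
  · simpa [closedBall_eq_empty.2 hr] using isPreconnected_empty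
  set A := ‖p - c‖
  set u := exp (arg (p - c) * I)
  have hp : p = c + A * u := by rw [norm_mul_exp_arg_mul_I]; ring
  have hRu : (R * u : ℂ) ≠ 0 := mul_ne_zero (ofReal_ne_zero.2 hR.ne') (exp_ne_zero _)
  set f : ℂ → ℂ := fun w => c + R * u * w
  have hf : Function.Surjective f := fun y =>
    ⟨(y - c) / (R * u), by simp only [f]; rw [mul_div_cancel₀ _ hRu]; ring⟩
  have hpre : f ⁻¹' (closedBall p r ∩ sphere c R) =
      sphere 0 1 ∩ {w | R ^ 2 + A ^ 2 - r ^ 2 ≤ 2 * A * R * w.re} := by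
    ext w
    simp only [Set.mem_preimage, Set.mem_inter_iff, mem_closedBall, mem_sphere, dist_eq_norm,
      Set.mem_ofPred_eq, f]
    have hu : ‖u‖ = 1 := norm_exp_ofReal_mul_I _
    rw [show c + R * u * w - p = u * (R * w - A) by rw [hp]; ring,
      show c + R * u * w - c = u * (R * w) by ring, norm_mul, norm_mul, norm_mul, hu, one_mul,
      one_mul, norm_real, Real.norm_of_nonneg hR.le, sub_zero, mul_eq_left₀ hR.ne', and_comm]
    refine and_congr_right fun hw => ?_
    rw [← sq_le_sq₀ (norm_nonneg _) hr, norm_ofReal_mul_sub_ofReal_sq hw]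
    constructor <;> intro <;> linarith
  rw [← Set.image_preimage_eq (closedBall p r ∩ sphere c R) hf, hpre]
  exact (isPreconnected_sphere_inter_le_mul_re _ (by positivity)).image f (by fun_prop)

end Complex

theorem isPreconnected_closedBall_inter_sphere_of_finrank_eq_two {E : Type*}
    [NormedAddCommGroup E] [InnerProductSpace ℝ E] (hE : finrank ℝ E = 2) (p c : E) (r R : ℝ) :
    IsPreconnected (closedBall p r ∩ sphere c R) := by
  have : FiniteDimensional ℝ E := Module.finite_of_finrank_eq_succ hE
  let e : ℂ ≃ₗᵢ[ℝ] E :=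
    Complex.isometryOfOrthonormal ((stdOrthonormalBasis ℝ E).reindex (finCongr hE))
  have h := (Complex.isPreconnected_closedBall_inter_sphere (e.symm p) (e.symm c) r R).image e
    e.continuous.continuousOn
  rwa [Set.image_inter e.injective, e.image_closedBall, e.image_sphere, e.apply_symm_apply,
    e.apply_symm_apply] at h

theorem pi_set_of_circle_empty_general (c : EuclideanSpace ℝ (Fin 2)) (R : ℝ) :
    (∀ p : EuclideanSpace ℝ (Fin 2), ∀ r > (0 : ℝ),
      IsPreconnected (closedBall p r ∩ sphere c R)) ∧
    {p : EuclideanSpace ℝ (Fin 2) |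
      ∃ r > (0 : ℝ), ¬ IsPreconnected (closedBall p r ∩ sphere c R)} = ∅ := by
  have h (p : EuclideanSpace ℝ (Fin 2)) (r : ℝ) : IsPreconnected (closedBall p r ∩ sphere c R) :=
    isPreconnected_closedBall_inter_sphere_of_finrank_eq_two finrank_euclideanSpace_fin p c r R
  exact ⟨fun p r _ => h p r, Set.eq_empty_of_forall_notMem fun p ⟨r, _, hr⟩ => hr (h p r)⟩

/-- If `S` is a circle, every closed ball meets it in a connected set, so Π(S) = ∅. -/
theorem pi_set_of_circle_empty (c : EuclideanSpace ℝ (Fin 2)) (R : ℝ) (hR : 0 < R) :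
    (∀ p : EuclideanSpace ℝ (Fin 2), ∀ r > (0 : ℝ),
      IsPreconnected (closedBall p r ∩ sphere c R)) ∧
    {p : EuclideanSpace ℝ (Fin 2) |
      ∃ r > (0 : ℝ), ¬ IsPreconnected (closedBall p r ∩ sphere c R)} = ∅ :=
  pi_set_of_circle_empty_general c R
end
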